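/- arXiv:1506.08456 — 5 statements merged into one kernel-verified Lean document; each statement's English description precedes it below -/
import Mathlib

section
/- Let ℓ>0 and I=(−ℓ,ℓ), let [a,b]⊂I be a compact subinterval and ξ*∈(a,b). Let θ:I→ℝ be continuously differentiable with (ξ−ξ*)·θ(ξ)<0 for every ξ∈[a,b] with ξ≠ξ*, and θ′(ξ*)<0. Let r,ρ:[0,∞)→ℝ be measurable with |r(t)|≤1/2 and |ρ(t)|≤η for all t≥0, where η≥0. Let ξ:[0,∞)→[a,b] be differentiable with ξ′(t)=θ(ξ(t))(1+r(t))+ρ(t) for all t≥0 and ξ(0)=ξ₀∈[a,b]. Then there exists β>0, depending only on θ and [a,b], such that |ξ(t)−ξ*| ≤ |ξ₀−ξ*| e^{−βt} + η/β for all t≥0. -/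
/-!
Write `θ ξ = (ξ - ξ*) · h ξ` with `h = dslope θ ξ*`. The sign condition and `θ'(ξ*) < 0` make `h`
negative on `[a, b]`, and `h` is continuous there, so `h ≤ -c` for some `c > 0`. Since
`1 + r ≥ 1/2`, the distance `|ξ - ξ*|` then has right derivative at most `-(c/2)|ξ - ξ*| + η`,
and Grönwall's inequality with the negative rate `-c/2` gives the bound with `β = c/2`.
-/

open Set Filter Topology

theorem eq_zero_of_sub_mul_neg {f : ℝ → ℝ} {x₀ : ℝ} (hf : ContinuousAt f x₀)
    (hsign : ∀ᶠ x in 𝓝[≠] x₀, (x - x₀) * f x < 0) : f x₀ = 0 := by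
  have hright : f x₀ ≤ 0 := by
    refine le_of_tendsto (hf.mono_left (nhdsWithin_le_nhds (s := Ioi x₀))) ?_
    filter_upwards [self_mem_nhdsWithin, nhdsWithin_mono x₀ (fun x hx => ne_of_gt hx) hsign]
      with x hx hneg
    exact (neg_of_mul_neg_right hneg (sub_pos.2 hx).le).le
  have hleft : 0 ≤ f x₀ := by
    refine ge_of_tendsto (hf.mono_left (nhdsWithin_le_nhds (s := Iio x₀))) ?_
    filter_upwards [self_mem_nhdsWithin, nhdsWithin_mono x₀ (fun x hx => ne_of_lt hx) hsign]
      with x hx hneg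
    exact (pos_of_mul_neg_right hneg (sub_neg.2 hx).le).le
  exact le_antisymm hright hleft

theorem exists_pos_sign_mul_le_neg_mul_abs {f : ℝ → ℝ} {s : Set ℝ} {x₀ : ℝ}
    (hs : IsCompact s) (hx₀ : s ∈ 𝓝 x₀) (hf : ContinuousOn f s) (hd : DifferentiableAt ℝ f x₀)
    (hsign : ∀ x ∈ s, x ≠ x₀ → (x - x₀) * f x < 0) (hderiv : deriv f x₀ < 0) :
    ∃ c > 0, ∀ x ∈ s, (SignType.sign (x - x₀) : ℝ) * f x ≤ -c * |x - x₀| := by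
  have hf₀ : f x₀ = 0 := eq_zero_of_sub_mul_neg (hf.continuousAt hx₀) <|
    eventually_nhdsWithin_iff.2 (eventually_of_mem hx₀ hsign)
  have hfactor : ∀ x, f x = (x - x₀) * dslope f x₀ x := fun x => by
    rw [← smul_eq_mul, sub_smul_dslope, hf₀, sub_zero]
  have hslope_neg : ∀ x ∈ s, dslope f x₀ x < 0 := by
    intro x hx
    rcases eq_or_ne x x₀ with rfl | hne
    · rwa [dslope_same]
    · have hmul := hsign x hx hne
      rw [hfactor, ← mul_assoc, ← sq] at hmul
      exact neg_of_mul_neg_right hmul (sq_nonneg _)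
  obtain ⟨x₁, hx₁, hmax⟩ :=
    hs.exists_isMaxOn ⟨x₀, mem_of_mem_nhds hx₀⟩ ((continuousOn_dslope hx₀).2 ⟨hf, hd⟩)
  refine ⟨-dslope f x₀ x₁, neg_pos.2 (hslope_neg x₁ hx₁), fun x hx => ?_⟩
  calc (SignType.sign (x - x₀) : ℝ) * f x
      = |x - x₀| * dslope f x₀ x := by
        rw [hfactor, ← mul_assoc, sign_mul_self]
    _ ≤ |x - x₀| * dslope f x₀ x₁ := mul_le_mul_of_nonneg_left (hmax hx) (abs_nonneg _)
    _ = -(-dslope f x₀ x₁) * |x - x₀| := by ring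

theorem abs_le_gronwallBound_of_sign_mul_deriv_le {u u' : ℝ → ℝ} {δ K ε a b : ℝ}
    (hcont : ContinuousOn u (Icc a b))
    (hu : ∀ t ∈ Ico a b, HasDerivWithinAt u (u' t) (Ici t) t) (ha : |u a| ≤ δ)
    (hbound : ∀ t ∈ Ico a b, u t ≠ 0 → SignType.sign (u t) * u' t ≤ K * |u t| + ε)
    (hzero : ∀ t ∈ Ico a b, u t = 0 → |u' t| ≤ ε) :
    ∀ t ∈ Icc a b, |u t| ≤ gronwallBound δ K ε (t - a) := by
  -- at a zero of `u`, `|u|` need not be differentiable, but its right Dini derivative is `≤ |u'| ≤ ε`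
  let g' : ℝ → ℝ := fun t => if u t = 0 then ε else SignType.sign (u t) * u' t
  refine le_gronwallBound_of_liminf_deriv_right_le (f' := g') hcont.abs (fun t ht r hr => ?_) ha
    (fun t ht => ?_)
  · by_cases h0 : u t = 0
    · simp only [g', if_pos h0] at hr
      simpa only [Real.norm_eq_abs] using
        (hu t ht).liminf_right_slope_norm_le (lt_of_le_of_lt (hzero t ht h0) hr)
    · simp only [g', if_neg h0] at hr
      simpa only [slope_def_field, div_eq_inv_mul, Function.comp_def] using
        ((hasDerivAt_abs h0).comp_hasDerivWithinAt t (hu t ht)).liminf_right_slope_le hr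
  · by_cases h0 : u t = 0
    · simp [g', h0]
    · simpa only [g', if_neg h0] using hbound t ht h0

theorem sign_mul_perturbed_le {d θ r ρ c η : ℝ}
    (hθ : (SignType.sign d : ℝ) * θ ≤ -c * |d|) (hc : 0 ≤ c) (hr : |r| ≤ 1 / 2) (hρ : |ρ| ≤ η) :
    (SignType.sign d : ℝ) * (θ * (1 + r) + ρ) ≤ -(c / 2) * |d| + η := by
  have hdrift : (SignType.sign d : ℝ) * θ * (1 + r) ≤ -(c / 2) * |d| := by
    have hθ_nonpos : (SignType.sign d : ℝ) * θ ≤ 0 :=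
      hθ.trans (mul_nonpos_of_nonpos_of_nonneg (neg_nonpos.2 hc) (abs_nonneg d))
    nlinarith [abs_le.1 hr]
  have hnoise : (SignType.sign d : ℝ) * ρ ≤ η := by
    rcases lt_trichotomy d 0 with hd | rfl | hd
    · simp only [sign_neg hd, SignType.coe_neg_one]; linarith [neg_abs_le ρ]
    · simpa using (abs_nonneg ρ).trans hρ
    · simp only [sign_pos hd, SignType.coe_one]; linarith [le_abs_self ρ]
  linarith

theorem gronwallBound_le_of_neg {δ K ε : ℝ} (hK : K < 0) (hε : 0 ≤ ε) (x : ℝ) :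
    gronwallBound δ K ε x ≤ δ * Real.exp (K * x) + ε / -K := by
  rw [gronwallBound_of_K_ne_0 hK.ne]
  have hcoef : 0 ≤ ε / -K := div_nonneg hε (neg_nonneg.2 hK.le)
  calc δ * Real.exp (K * x) + ε / K * (Real.exp (K * x) - 1)
      = δ * Real.exp (K * x) + ε / -K - ε / -K * Real.exp (K * x) := by rw [div_neg]; ring
    _ ≤ δ * Real.exp (K * x) + ε / -K := sub_le_self _ (mul_nonneg hcoef (Real.exp_pos _).le)

theorem stmt1_general (ℓ a b ξstar : ℝ)
    (ha : -ℓ < a) (hb : b < ℓ)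
    (hξstar : ξstar ∈ Set.Ioo a b)
    (θ : ℝ → ℝ) (hθ : ContDiffOn ℝ 1 θ (Set.Ioo (-ℓ) ℓ))
    (hsign : ∀ ξ ∈ Set.Icc a b, ξ ≠ ξstar → (ξ - ξstar) * θ ξ < 0)
    (hθ' : deriv θ ξstar < 0) :
    ∃ β > 0, ∀ (η : ℝ), 0 ≤ η → ∀ (r ρ ξ : ℝ → ℝ) (ξ₀ : ℝ),
      Measurable r → Measurable ρ →
      (∀ t ≥ 0, |r t| ≤ 1 / 2) → (∀ t ≥ 0, |ρ t| ≤ η) →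
      (∀ t ≥ 0, ξ t ∈ Set.Icc a b) →
      (∀ t ≥ 0, HasDerivAt ξ (θ (ξ t) * (1 + r t) + ρ t) t) →
      ξ 0 = ξ₀ → ξ₀ ∈ Set.Icc a b →
      ∀ t ≥ 0, |ξ t - ξstar| ≤ |ξ₀ - ξstar| * Real.exp (-β * t) + η / β := by
  have hIcc_sub : Icc a b ⊆ Ioo (-ℓ) ℓ := Icc_subset_Ioo ha hb
  have hIcc_nhds : Icc a b ∈ 𝓝 ξstar := Icc_mem_nhds hξstar.1 hξstar.2
  have hdiff : DifferentiableAt ℝ θ ξstar :=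
    (hθ.differentiableOn one_ne_zero).differentiableAt
      (isOpen_Ioo.mem_nhds (hIcc_sub (mem_of_mem_nhds hIcc_nhds)))
  have hθ_cont : ContinuousOn θ (Icc a b) := hθ.continuousOn.mono hIcc_sub
  have hθ_zero : θ ξstar = 0 := eq_zero_of_sub_mul_neg (hθ_cont.continuousAt hIcc_nhds) <|
    eventually_nhdsWithin_iff.2 (eventually_of_mem hIcc_nhds hsign)
  obtain ⟨c, hc, hcoercive⟩ :=
    exists_pos_sign_mul_le_neg_mul_abs isCompact_Icc hIcc_nhds hθ_cont hdiff hsign hθ'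
  refine ⟨c / 2, half_pos hc, fun η hη r ρ ξ ξ₀ _ _ hr hρ hξ_mem hξ_ode hξ_init _ T hT => ?_⟩
  have hdist := abs_le_gronwallBound_of_sign_mul_deriv_le (u := fun t => ξ t - ξstar)
    (u' := fun t => θ (ξ t) * (1 + r t) + ρ t) (δ := |ξ₀ - ξstar|) (K := -(c / 2)) (ε := η)
    (fun t ht => ((hξ_ode t ht.1).sub_const ξstar).continuousAt.continuousWithinAt)
    (fun t ht => ((hξ_ode t ht.1).sub_const ξstar).hasDerivWithinAt) (by rw [hξ_init])
    (fun t ht _ => sign_mul_perturbed_le (hcoercive _ (hξ_mem t ht.1)) hc.le (hr t ht.1)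
      (hρ t ht.1))
    (fun t ht h0 => by
      rw [sub_eq_zero.1 h0, hθ_zero, zero_mul, zero_add]
      exact hρ t ht.1) T ⟨hT, le_rfl⟩
  calc |ξ T - ξstar| ≤ gronwallBound |ξ₀ - ξstar| (-(c / 2)) η T := by
        simpa only [sub_zero] using hdist
    _ ≤ |ξ₀ - ξstar| * Real.exp (-(c / 2) * T) + η / (c / 2) := by
        simpa only [neg_neg] using gronwallBound_le_of_neg (neg_lt_zero.2 (half_pos hc)) hη T

/-- Slow motion of the shock layer (Proposition 3.5, quantitative form with remainder):
the interface position `ξ(t)` solving `ξ' = θ(ξ)(1+r(t)) + ρ(t)` with `|ρ| ≤ η`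
satisfies `|ξ(t)−ξ*| ≤ |ξ₀−ξ*| e^{−βt} + η/β`. -/
theorem stmt1 (ℓ a b ξstar : ℝ) (hℓ : 0 < ℓ)
    (ha : -ℓ < a) (hb : b < ℓ) (hab : a < b)
    (hξstar : ξstar ∈ Set.Ioo a b)
    (θ : ℝ → ℝ) (hθ : ContDiffOn ℝ 1 θ (Set.Ioo (-ℓ) ℓ))
    (hsign : ∀ ξ ∈ Set.Icc a b, ξ ≠ ξstar → (ξ - ξstar) * θ ξ < 0)
    (hθ' : deriv θ ξstar < 0) :
    ∃ β > 0, ∀ (η : ℝ), 0 ≤ η → ∀ (r ρ ξ : ℝ → ℝ) (ξ₀ : ℝ),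
      Measurable r → Measurable ρ →
      (∀ t ≥ 0, |r t| ≤ 1 / 2) → (∀ t ≥ 0, |ρ t| ≤ η) →
      (∀ t ≥ 0, ξ t ∈ Set.Icc a b) →
      (∀ t ≥ 0, HasDerivAt ξ (θ (ξ t) * (1 + r t) + ρ t) t) →
      ξ 0 = ξ₀ → ξ₀ ∈ Set.Icc a b →
      ∀ t ≥ 0, |ξ t - ξstar| ≤ |ξ₀ - ξstar| * Real.exp (-β * t) + η / β :=
  stmt1_general ℓ a b ξstar ha hb hξstar θ hθ hsign hθ'
end

section
/- Let ℓ>0, let a:[−ℓ,ℓ]→ℝ be continuously differentiable with a(x)>0 for all x, define b(x)=∫_{−ℓ}^{x} dt/a(t), and fix constants c∈ℝ, κ∈ℝ, ε>0. Then the function u(x) = −κ·tanh( κ(b(x)−c)/(2ε) ) satisfies ε·(a(x)u′(x))′ = u(x)u′(x) for all x∈[−ℓ,ℓ]; that is, u is an exact stationary solution of the quasilinear viscous Burgers equation ∂ₜu = ε∂ₓ(a(x)∂ₓu) − ∂ₓ(u²/2). -/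
/-!
Write `φ = κ (b - c) / (2ε)`, so that `u = -κ tanh φ` and `φ' = κ / (2ε a)` because `b' = 1 / a`.
The factor `1 / a` cancels in the flux: `a u' = -(κ² / 2ε) (1 - tanh² φ)`. Differentiating once more,
`ε (a u')' = κ² tanh φ · (tanh φ)' = u u'`.
-/

open Real Set

theorem Real.hasDerivAt_tanh (x : ℝ) : HasDerivAt tanh (1 - tanh x ^ 2) x := by
  have h := (hasDerivAt_sinh x).div (hasDerivAt_cosh x) (cosh_pos x).ne'
  rw [show sinh / cosh = tanh from funext fun y => (tanh_eq_sinh_div_cosh y).symm] at h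
  exact h.congr_deriv (by rw [tanh_eq_sinh_div_cosh]; field_simp)

theorem HasDerivWithinAt.tanh {f : ℝ → ℝ} {f' x : ℝ} {s : Set ℝ} (hf : HasDerivWithinAt f f' s x) :
    HasDerivWithinAt (fun y => Real.tanh (f y)) ((1 - Real.tanh (f x) ^ 2) * f') s x :=
  (hasDerivAt_tanh (f x)).comp_hasDerivWithinAt x hf

theorem intervalIntegral.hasDerivWithinAt_integral_Icc {f : ℝ → ℝ} {a b x : ℝ}
    (hf : ContinuousOn f (Icc a b)) (hx : x ∈ Icc a b) :
    HasDerivWithinAt (fun z => ∫ t in a..z, f t) (f x) (Icc a b) x := by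
  have : Fact (x ∈ Icc a b) := ⟨hx⟩
  exact integral_hasDerivWithinAt_right
    ((hf.mono (uIcc_subset_Icc (left_mem_Icc.2 (hx.1.trans hx.2)) hx)).intervalIntegrable)
    (hf.stronglyMeasurableAtFilter_nhdsWithin measurableSet_Icc x) (hf x hx)

noncomputable def burgersProfile (κ c ε : ℝ) (b : ℝ → ℝ) (x : ℝ) : ℝ :=
  -κ * tanh (κ * (b x - c) / (2 * ε))

section

variable {s : Set ℝ} {a b : ℝ → ℝ} {κ c ε x : ℝ}

theorem hasDerivWithinAt_burgersProfile (hb : HasDerivWithinAt b (1 / a x) s x) :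
    HasDerivWithinAt (burgersProfile κ c ε b)
      (-(κ ^ 2 / (2 * ε)) * (1 - tanh (κ * (b x - c) / (2 * ε)) ^ 2) / a x) s x :=
  ((((hb.sub_const c).const_mul κ).div_const (2 * ε)).tanh.const_mul (-κ)).congr_deriv
    (by ring)

theorem mul_derivWithin_burgersProfile (hs : UniqueDiffWithinAt ℝ s x) (ha : a x ≠ 0)
    (hb : HasDerivWithinAt b (1 / a x) s x) :
    a x * derivWithin (burgersProfile κ c ε b) s x
      = -(κ ^ 2 / (2 * ε)) * (1 - tanh (κ * (b x - c) / (2 * ε)) ^ 2) := by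
  rw [(hasDerivWithinAt_burgersProfile hb).derivWithin hs]
  field_simp

theorem burgersProfile_stationary (hs : UniqueDiffOn ℝ s) (hε : ε ≠ 0)
    (ha : ∀ x ∈ s, a x ≠ 0) (hb : ∀ x ∈ s, HasDerivWithinAt b (1 / a x) s x) (hx : x ∈ s) :
    ε * derivWithin (fun y => a y * derivWithin (burgersProfile κ c ε b) s y) s x
      = burgersProfile κ c ε b x * derivWithin (burgersProfile κ c ε b) s x := by
  set φ : ℝ → ℝ := fun y => κ * (b y - c) / (2 * ε)
  have hφ : HasDerivWithinAt φ (κ / (2 * ε) / a x) s x :=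
    (((hb x hx).sub_const c).const_mul κ).div_const (2 * ε) |>.congr_deriv (by ring)
  have hflux : EqOn (fun y => a y * derivWithin (burgersProfile κ c ε b) s y)
      (fun y => -(κ ^ 2 / (2 * ε)) * (1 - tanh (φ y) ^ 2)) s := fun y hy =>
    mul_derivWithin_burgersProfile (hs y hy) (ha y hy) (hb y hy)
  have hflux' := ((hφ.tanh.fun_pow 2).const_sub 1).const_mul (-(κ ^ 2 / (2 * ε)))
  rw [derivWithin_congr hflux (hflux hx), hflux'.derivWithin (hs x hx),
    (hasDerivWithinAt_burgersProfile (hb x hx)).derivWithin (hs x hx)]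
  have hax := ha x hx
  simp only [burgersProfile, φ]
  field_simp
  ring

end

/-- The profile `u(x) = −κ tanh(κ(b(x)−c)/(2ε))`, with `b(x) = ∫_{−ℓ}^x dt/a(t)`,
is an exact stationary solution of the quasilinear viscous Burgers equation:
`ε (a u')' = u u'` on `[−ℓ,ℓ]`. -/
theorem stmt3 (ℓ c κ ε : ℝ) (hℓ : 0 < ℓ) (hε : 0 < ε)
    (a : ℝ → ℝ) (ha : ContDiffOn ℝ 1 a (Set.Icc (-ℓ) ℓ))
    (hapos : ∀ x ∈ Set.Icc (-ℓ) ℓ, 0 < a x) :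
    ∀ x ∈ Set.Icc (-ℓ) ℓ,
      ε * derivWithin (fun y => a y * derivWithin
            (fun z => -κ * Real.tanh (κ * ((∫ t in (-ℓ)..z, 1 / a t) - c) / (2 * ε)))
            (Set.Icc (-ℓ) ℓ) y) (Set.Icc (-ℓ) ℓ) x
        = (-κ * Real.tanh (κ * ((∫ t in (-ℓ)..x, 1 / a t) - c) / (2 * ε)))
            * derivWithin
              (fun z => -κ * Real.tanh (κ * ((∫ t in (-ℓ)..z, 1 / a t) - c) / (2 * ε)))
              (Set.Icc (-ℓ) ℓ) x := by
  intro x hx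
  have hinv : ContinuousOn (fun t => 1 / a t) (Icc (-ℓ) ℓ) :=
    continuousOn_const.div ha.continuousOn fun t ht => (hapos t ht).ne'
  exact burgersProfile_stationary (uniqueDiffOn_Icc (by linarith)) hε.ne'
    (fun y hy => (hapos y hy).ne')
    (fun y hy => intervalIntegral.hasDerivWithinAt_integral_Icc hinv hy) hx
end

section
/- For all ε>0, ℓ>0 and u*>0 there exists a unique κ>0 such that κ·tanh(κℓ/(2ε)) = u*. Moreover this κ satisfies u* < κ and κ − u* ≤ 2u*/(e^{u*ℓ/ε} − 1). -/
/-!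
The map `x ↦ x tanh (a x)` (with `a = ℓ/(2ε)`) vanishes at `0`, is continuous and strictly
increasing on `[0, ∞)` and unbounded, so it takes the value `u*` exactly once. Writing
`tanh y = 1 - 2/(e^{2y} + 1)`, the equation `κ tanh (aκ) = u*` becomes
`κ - u* = 2u*/(e^{2aκ} - 1)`, which is decreasing in `κ`; since `tanh < 1` forces `κ > u*`,
evaluating the right-hand side at `u*` gives the bound.
-/

open Set

namespace Real

theorem tanh_eq_one_sub_two_div (x : ℝ) : tanh x = 1 - 2 / (exp (2 * x) + 1) := by
  rw [tanh_eq, two_mul, exp_add, exp_neg]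
  have := exp_pos x
  field_simp
  ring

theorem tanh_strictMono : StrictMono tanh := by
  intro x y hxy
  simp only [tanh_eq_one_sub_two_div]
  gcongr

theorem tanh_pos {x : ℝ} (hx : 0 < x) : 0 < tanh x := by
  simpa using tanh_strictMono hx

@[fun_prop]
theorem continuous_tanh : Continuous tanh := by
  simp only [funext tanh_eq_one_sub_two_div]
  exact continuous_const.sub <| continuous_const.div (by fun_prop) fun x => by positivity

end Real

open Real

theorem lt_of_mul_tanh_eq {x y u : ℝ} (hx : 0 < x) (h : x * tanh y = u) : u < x := by
  simpa [← h] using mul_lt_mul_of_pos_left (tanh_lt_one y) hx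

theorem sub_eq_of_mul_tanh_eq {x y u : ℝ} (hy : y ≠ 0) (h : x * tanh y = u) :
    x - u = 2 * u / (exp (2 * y) - 1) := by
  have hE : exp (2 * y) - 1 ≠ 0 := sub_ne_zero.2 (by simpa using hy)
  have hE' : exp (2 * y) + 1 ≠ 0 := by positivity
  rw [← h, tanh_eq_one_sub_two_div]
  field_simp
  ring

section MulTanhMul

variable {a : ℝ}

theorem strictMonoOn_mul_tanh_mul (ha : 0 < a) :
    StrictMonoOn (fun x => x * tanh (x * a)) (Ici 0) := by
  intro x (hx : 0 ≤ x) y _ hxy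
  calc x * tanh (x * a) ≤ x * tanh (y * a) := by
        gcongr
        exact tanh_strictMono.monotone (by gcongr)
    _ < y * tanh (y * a) := by
        gcongr
        exact tanh_pos (by nlinarith)

theorem exists_mul_tanh_mul_eq (ha : 0 < a) {u : ℝ} (hu : 0 ≤ u) :
    ∃ x, 0 ≤ x ∧ x * tanh (x * a) = u := by
  set K := max 1 (u / tanh a)
  have hK : 1 ≤ K := le_max_left _ _
  have hKu : u ≤ K * tanh (K * a) := calc
    u ≤ K * tanh a := (div_le_iff₀ (tanh_pos ha)).1 (le_max_right _ _)
    _ ≤ K * tanh (K * a) := by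
        gcongr
        exact tanh_strictMono.monotone (by nlinarith)
  obtain ⟨x, hx, hxu⟩ := intermediate_value_Icc (zero_le_one.trans hK)
    (f := fun x => x * tanh (x * a)) (by fun_prop) ⟨by simpa using hu, hKu⟩
  exact ⟨x, hx.1, hxu⟩

theorem existsUnique_mul_tanh_mul_eq (ha : 0 < a) {u : ℝ} (hu : 0 < u) :
    ∃! x, 0 < x ∧ x * tanh (x * a) = u := by
  obtain ⟨x, hx, hxu⟩ := exists_mul_tanh_mul_eq ha hu.le
  have hx : 0 < x := hx.lt_of_ne (by rintro rfl; simp at hxu; linarith)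
  refine ⟨x, ⟨hx, hxu⟩, fun y ⟨hy, hyu⟩ => ?_⟩
  exact (strictMonoOn_mul_tanh_mul ha).injOn hy.le hx.le (hyu.trans hxu.symm)

theorem sub_le_of_mul_tanh_mul_eq (ha : 0 < a) {x u : ℝ} (hx : 0 < x)
    (h : x * tanh (x * a) = u) : x - u ≤ 2 * u / (exp (2 * a * u) - 1) := by
  have hux := lt_of_mul_tanh_eq hx h
  have hu : 0 < u := h ▸ mul_pos hx (tanh_pos (by positivity))
  rw [sub_eq_of_mul_tanh_eq (by positivity) h]
  have : 1 < exp (2 * a * u) := one_lt_exp_iff.2 (by positivity)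
  gcongr 2 * u / (exp ?_ - 1)
  nlinarith

end MulTanhMul

/-- For the viscous Burgers steady state, there is a unique `κ > 0` with
`κ tanh(κℓ/(2ε)) = u*`, and it satisfies `u* < κ` and
`κ − u* ≤ 2u*/(e^{u*ℓ/ε} − 1)`. -/
theorem stmt4 (ε ℓ ustar : ℝ) (hε : 0 < ε) (hℓ : 0 < ℓ) (hu : 0 < ustar) :
    ∃ κ : ℝ, (0 < κ ∧ κ * Real.tanh (κ * ℓ / (2 * ε)) = ustar)
      ∧ (∀ κ' : ℝ, 0 < κ' → κ' * Real.tanh (κ' * ℓ / (2 * ε)) = ustar → κ' = κ)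
      ∧ ustar < κ
      ∧ κ - ustar ≤ 2 * ustar / (Real.exp (ustar * ℓ / ε) - 1) := by
  have ha : 0 < ℓ / (2 * ε) := by positivity
  simp only [mul_div_assoc]
  obtain ⟨κ, ⟨hκ, hκu⟩, huniq⟩ := existsUnique_mul_tanh_mul_eq ha hu
  refine ⟨κ, ⟨hκ, hκu⟩, fun κ' h₁ h₂ => huniq κ' ⟨h₁, h₂⟩, lt_of_mul_tanh_eq hκ hκu, ?_⟩
  convert sub_le_of_mul_tanh_mul_eq ha hκ hκu using 4
  field_simp
end

section
/- Let f:ℝ→ℝ be twice continuously differentiable with f″(u) ≥ c₀ > 0 for all u, and let u₊ < u₋ be such that f(u₊)=f(u₋)=:F and f′(u₊)<0<f′(u₋). Then: (i) for every κ>F one has κ−f(s)>0 for all s∈[u₊,u₋], so Φ(κ) := ∫_{u₊}^{u₋} ds/(κ−f(s)) is well defined; (ii) Φ is strictly decreasing on (F,+∞); (iii) Φ(κ)→+∞ as κ→F⁺ and Φ(κ)→0 as κ→+∞; consequently (iv) for every M>0 there exists a unique κ∈(F,+∞) with Φ(κ)=M. -/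
open Set Filter Topology MeasureTheory intervalIntegral

/-!
By convexity `f ≤ F` on `[u₊, u₋]`, so for `κ > F` the integrand is continuous and positive, `Φ` is
strictly decreasing and continuous, and `Φ(κ) ≤ (u₋ - u₊)/(κ - F) → 0`. Near `κ = F` the tangent
line at `u₊` gives `κ - f(s) ≤ (κ - F) + L (s - u₊)` with `L = -f′(u₊) > 0`, and the reciprocal of
the right side integrates to `L⁻¹ log(1 + L (u₋ - u₊)/(κ - F)) → ∞`. The intermediate value theorem
and strict monotonicity then give exactly one `κ` with `Φ(κ) = M`.
-/

theorem integral_one_div_add_mul {c L ℓ : ℝ} (hc : 0 < c) (hL : 0 < L) (hℓ : 0 ≤ ℓ) :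
    ∫ t in (0 : ℝ)..ℓ, 1 / (c + L * t) = L⁻¹ * Real.log (1 + L * ℓ / c) := by
  rw [integral_comp_add_mul (fun x : ℝ => 1 / x) hL.ne',
    integral_one_div_of_pos (by simpa) (by positivity), smul_eq_mul, mul_zero, add_zero, add_div,
    div_self hc.ne']

theorem ConvexOn.add_deriv_mul_sub_le {f : ℝ → ℝ} (hf : ConvexOn ℝ univ f) {a : ℝ}
    (hd : DifferentiableAt ℝ f a) (s : ℝ) : f a + deriv f a * (s - a) ≤ f s := by
  rcases lt_trichotomy a s with has | rfl | hsa
  · have := hf.deriv_le_slope (mem_univ a) (mem_univ s) has hd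
    rw [slope_def_field, le_div_iff₀ (sub_pos.2 has)] at this
    linarith
  · simp
  · have := hf.slope_le_deriv (mem_univ s) (mem_univ a) hsa hd
    rw [slope_def_field, div_le_iff₀ (sub_pos.2 hsa)] at this
    linarith

theorem ConvexOn.le_of_mem_Icc {f : ℝ → ℝ} {a b s F : ℝ} (hf : ConvexOn ℝ (Icc a b) f)
    (ha : f a ≤ F) (hb : f b ≤ F) (hs : s ∈ Icc a b) : f s ≤ F := by
  have hab : a ≤ b := hs.1.trans hs.2
  have := hf.le_on_segment (left_mem_Icc.2 hab) (right_mem_Icc.2 hab)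
    (by rwa [segment_eq_Icc hab])
  exact this.trans (max_le ha hb)

/-- The paper's `Φ(κ) = ∫_{u₊}^{u₋} ds / (κ - f s)`. -/
noncomputable def invGapIntegral (f : ℝ → ℝ) (a b κ : ℝ) : ℝ := ∫ s in a..b, 1 / (κ - f s)

section invGapIntegral

variable {f : ℝ → ℝ} {a b F κ : ℝ}

theorem continuousOn_one_div_sub (hf : ContinuousOn f (Icc a b))
    (hF : ∀ s ∈ Icc a b, f s ≤ F) (hκ : F < κ) :
    ContinuousOn (fun s => 1 / (κ - f s)) (Icc a b) :=
  continuousOn_const.div (continuousOn_const.sub hf)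
    fun s hs => (sub_pos.2 ((hF s hs).trans_lt hκ)).ne'

theorem strictAntiOn_invGapIntegral (hab : a < b) (hf : ContinuousOn f (Icc a b))
    (hF : ∀ s ∈ Icc a b, f s ≤ F) : StrictAntiOn (invGapIntegral f a b) (Ioi F) := by
  intro κ₁ h₁ κ₂ h₂ h₁₂
  have hpos : ∀ s ∈ Icc a b, 0 < κ₁ - f s := fun s hs => sub_pos.2 ((hF s hs).trans_lt h₁)
  refine integral_lt_integral_of_continuousOn_of_le_of_exists_lt hab
    (continuousOn_one_div_sub hf hF h₂) (continuousOn_one_div_sub hf hF h₁)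
    (fun s hs => one_div_le_one_div_of_le (hpos s (Ioc_subset_Icc_self hs)) (by linarith))
    ⟨a, left_mem_Icc.2 hab.le, one_div_lt_one_div_of_lt (hpos a (left_mem_Icc.2 hab.le)) ?_⟩
  linarith

theorem continuousOn_invGapIntegral (hab : a ≤ b) (hf : Continuous f)
    (hF : ∀ s ∈ Icc a b, f s ≤ F) : ContinuousOn (invGapIntegral f a b) (Ioi F) := by
  intro κ₀ hκ₀
  set ε := (κ₀ - F) / 2
  have hε : 0 < ε := by simp only [ε, mem_Ioi] at hκ₀ ⊢; linarith
  -- Truncating the denominator at `ε` gives a jointly continuous integrand that agrees with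
  -- the original one for `κ > F + ε`.
  have hcont : Continuous fun κ => ∫ s in a..b, 1 / max (κ - f s) ε :=
    continuous_parametric_intervalIntegral_of_continuous' (continuous_const.div
      ((continuous_fst.sub (hf.comp continuous_snd)).max continuous_const)
      fun _ => (hε.trans_le (le_max_right _ _)).ne') a b
  refine (hcont.continuousAt.congr ?_).continuousWithinAt
  filter_upwards [Ioi_mem_nhds (show F + ε < κ₀ by simp only [ε, mem_Ioi] at hκ₀ ⊢; linarith)]
    with κ hκ
  refine integral_congr fun s hs => ?_
  rw [uIcc_of_le hab] at hs
  show 1 / max (κ - f s) ε = 1 / (κ - f s)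
  rw [max_eq_left (by linarith [hF s hs, mem_Ioi.1 hκ])]

theorem invGapIntegral_nonneg (hab : a ≤ b) (hF : ∀ s ∈ Icc a b, f s ≤ F) (hκ : F < κ) :
    0 ≤ invGapIntegral f a b κ :=
  integral_nonneg hab fun s hs => one_div_nonneg.2 (sub_pos.2 ((hF s hs).trans_lt hκ)).le

theorem invGapIntegral_le (hab : a ≤ b) (hf : ContinuousOn f (Icc a b))
    (hF : ∀ s ∈ Icc a b, f s ≤ F) (hκ : F < κ) :
    invGapIntegral f a b κ ≤ (b - a) * (1 / (κ - F)) := by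
  have := integral_mono_on hab ((continuousOn_one_div_sub hf hF hκ).intervalIntegrable_of_Icc hab)
    (intervalIntegrable_const (μ := volume)) fun s hs => one_div_le_one_div_of_le (sub_pos.2 hκ)
      (by linarith [hF s hs])
  rwa [intervalIntegral.integral_const, smul_eq_mul] at this

theorem tendsto_invGapIntegral_atTop (hab : a ≤ b) (hf : ContinuousOn f (Icc a b))
    (hF : ∀ s ∈ Icc a b, f s ≤ F) : Tendsto (invGapIntegral f a b) atTop (𝓝 0) := by
  have hbound : Tendsto (fun κ => (b - a) * (1 / (κ - F))) atTop (𝓝 0) := by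
    have : Tendsto (fun κ : ℝ => κ - F) atTop atTop := tendsto_atTop_add_const_right _ _ tendsto_id
    simpa only [one_div, Pi.inv_apply, mul_zero] using this.inv_tendsto_atTop.const_mul (b - a)
  refine tendsto_of_tendsto_of_tendsto_of_le_of_le' tendsto_const_nhds hbound ?_ ?_ <;>
    filter_upwards [eventually_gt_atTop F] with κ hκ
  exacts [invGapIntegral_nonneg hab hF hκ, invGapIntegral_le hab hf hF hκ]

theorem log_le_invGapIntegral {L : ℝ} (hab : a ≤ b) (hf : ContinuousOn f (Icc a b))
    (hF : ∀ s ∈ Icc a b, f s ≤ F) (hL : 0 < L) (htan : ∀ s ∈ Icc a b, F - L * (s - a) ≤ f s)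
    (hκ : F < κ) : L⁻¹ * Real.log (1 + L * (b - a) / (κ - F)) ≤ invGapIntegral f a b κ := by
  have hden : ∀ s ∈ Icc a b, 0 < κ - F + L * (s - a) := fun s hs =>
    add_pos_of_pos_of_nonneg (sub_pos.2 hκ) (mul_nonneg hL.le (sub_nonneg.2 hs.1))
  have hlin : ∫ s in a..b, 1 / (κ - F + L * (s - a)) = L⁻¹ * Real.log (1 + L * (b - a) / (κ - F)) := by
    rw [integral_comp_sub_right (fun t => 1 / (κ - F + L * t)), sub_self,
      integral_one_div_add_mul (sub_pos.2 hκ) hL (sub_nonneg.2 hab)]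
  rw [← hlin]
  refine integral_mono_on hab ?_ ((continuousOn_one_div_sub hf hF hκ).intervalIntegrable_of_Icc hab)
    fun s hs => one_div_le_one_div_of_le (sub_pos.2 ((hF s hs).trans_lt hκ)) (by linarith [htan s hs])
  exact (continuousOn_const.div (by fun_prop) fun s hs => (hden s hs).ne').intervalIntegrable_of_Icc hab

theorem tendsto_invGapIntegral_nhdsGT {L : ℝ} (hab : a < b) (hf : ContinuousOn f (Icc a b))
    (hF : ∀ s ∈ Icc a b, f s ≤ F) (hL : 0 < L) (htan : ∀ s ∈ Icc a b, F - L * (s - a) ≤ f s) :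
    Tendsto (invGapIntegral f a b) (𝓝[>] F) atTop := by
  refine tendsto_atTop_mono' _ (eventually_mem_nhdsWithin.mono fun κ hκ =>
    log_le_invGapIntegral hab.le hf hF hL htan hκ) ?_
  have hgap : Tendsto (fun κ => κ - F) (𝓝[>] F) (𝓝[>] 0) :=
    tendsto_nhdsWithin_of_tendsto_nhds_of_eventually_within _
      (((continuous_sub_right F).tendsto' F 0 (sub_self F)).mono_left nhdsWithin_le_nhds)
      (eventually_mem_nhdsWithin.mono fun _ hκ => sub_pos.2 (mem_Ioi.1 hκ))
  have hratio : Tendsto (fun κ => 1 + L * (b - a) / (κ - F)) (𝓝[>] F) atTop := by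
    simpa only [div_eq_mul_inv, Pi.inv_apply] using tendsto_atTop_add_const_left _ 1
      (hgap.inv_tendsto_nhdsGT_zero.const_mul_atTop (mul_pos hL (sub_pos.2 hab)))
  exact (Real.tendsto_log_atTop.comp hratio).const_mul_atTop (inv_pos.2 hL)

end invGapIntegral

theorem StrictAntiOn.existsUnique_eq_of_tendsto {g : ℝ → ℝ} {F m : ℝ}
    (hanti : StrictAntiOn g (Ioi F)) (hcont : ContinuousOn g (Ioi F))
    (hleft : Tendsto g (𝓝[>] F) atTop) (hright : Tendsto g atTop (𝓝 m)) {M : ℝ} (hM : m < M) :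
    ∃! κ, κ ∈ Ioi F ∧ g κ = M := by
  obtain ⟨κ₁, hκ₁M, hκ₁F⟩ := ((hleft.eventually_ge_atTop M).and self_mem_nhdsWithin).exists
  obtain ⟨κ₂, hκ₂M, hκ₁₂⟩ := ((hright.eventually_lt_const hM).and (eventually_gt_atTop κ₁)).exists
  have hsub : Icc κ₁ κ₂ ⊆ Ioi F := fun x hx => lt_of_lt_of_le hκ₁F hx.1
  obtain ⟨κ, hκ, hgκ⟩ :=
    intermediate_value_Icc' hκ₁₂.le (hcont.mono hsub) ⟨hκ₂M.le, hκ₁M⟩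
  exact ⟨κ, ⟨hsub hκ, hgκ⟩, fun κ' hκ' => hanti.injOn hκ'.1 (hsub hκ) (hκ'.2.trans hgκ.symm)⟩

theorem stmt5_general (c₀ : ℝ) (hc₀ : 0 < c₀) (f : ℝ → ℝ) (hf : ContDiff ℝ 2 f)
    (hf'' : ∀ u : ℝ, c₀ ≤ deriv (deriv f) u)
    (uplus uminus F : ℝ) (hlt : uplus < uminus)
    (hfp : f uplus = F) (hfm : f uminus = F)
    (hfp' : deriv f uplus < 0) :
    (∀ κ > F, ∀ s ∈ Set.Icc uplus uminus, 0 < κ - f s)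
    ∧ StrictAntiOn (fun κ => ∫ s in uplus..uminus, 1 / (κ - f s)) (Set.Ioi F)
    ∧ Filter.Tendsto (fun κ => ∫ s in uplus..uminus, 1 / (κ - f s))
        (nhdsWithin F (Set.Ioi F)) Filter.atTop
    ∧ Filter.Tendsto (fun κ => ∫ s in uplus..uminus, 1 / (κ - f s))
        Filter.atTop (nhds 0)
    ∧ (∀ M > 0, ∃! κ : ℝ, κ ∈ Set.Ioi F
        ∧ (∫ s in uplus..uminus, 1 / (κ - f s)) = M) := by
  have hdiff : Differentiable ℝ f := hf.differentiable (by norm_num)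
  have hconv : ConvexOn ℝ univ f := convexOn_univ_of_deriv2_nonneg hdiff
    (((contDiff_succ_iff_deriv (n := 1)).1 hf).2.2.differentiable (by norm_num))
    fun u => hc₀.le.trans (hf'' u)
  have hcont : ContinuousOn f (Icc uplus uminus) := hdiff.continuous.continuousOn
  have hF : ∀ s ∈ Icc uplus uminus, f s ≤ F := fun s hs =>
    (hconv.subset (subset_univ _) (convex_Icc _ _)).le_of_mem_Icc hfp.le hfm.le hs
  have htan : ∀ s ∈ Icc uplus uminus, F - -deriv f uplus * (s - uplus) ≤ f s := fun s _ => by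
    rw [neg_mul, sub_neg_eq_add, ← hfp]
    exact hconv.add_deriv_mul_sub_le (hdiff uplus) s
  have hanti := strictAntiOn_invGapIntegral hlt hcont hF
  have hleft := tendsto_invGapIntegral_nhdsGT hlt hcont hF (neg_pos.2 hfp') htan
  have hright := tendsto_invGapIntegral_atTop hlt.le hcont hF
  exact ⟨fun κ hκ s hs => sub_pos.2 ((hF s hs).trans_lt hκ), hanti, hleft, hright,
    fun M hM => hanti.existsUnique_eq_of_tendsto
      (continuousOn_invGapIntegral hlt.le hdiff.continuous hF) hleft hright hM⟩

/-- Properties of `Φ(κ) = ∫_{u₊}^{u₋} ds/(κ−f(s))` for a strictly convex flux `f`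
with `f(u₊)=f(u₋)=F`, `f′(u₊)<0<f′(u₋)`: positivity of the denominator, strict
monotonicity, limiting behavior, and unique solvability of `Φ(κ)=M`. -/
theorem stmt5 (c₀ : ℝ) (hc₀ : 0 < c₀) (f : ℝ → ℝ) (hf : ContDiff ℝ 2 f)
    (hf'' : ∀ u : ℝ, c₀ ≤ deriv (deriv f) u)
    (uplus uminus F : ℝ) (hlt : uplus < uminus)
    (hfp : f uplus = F) (hfm : f uminus = F)
    (hfp' : deriv f uplus < 0) (hfm' : 0 < deriv f uminus) :
    (∀ κ > F, ∀ s ∈ Set.Icc uplus uminus, 0 < κ - f s)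
    ∧ StrictAntiOn (fun κ => ∫ s in uplus..uminus, 1 / (κ - f s)) (Set.Ioi F)
    ∧ Filter.Tendsto (fun κ => ∫ s in uplus..uminus, 1 / (κ - f s))
        (nhdsWithin F (Set.Ioi F)) Filter.atTop
    ∧ Filter.Tendsto (fun κ => ∫ s in uplus..uminus, 1 / (κ - f s))
        Filter.atTop (nhds 0)
    ∧ (∀ M > 0, ∃! κ : ℝ, κ ∈ Set.Ioi F
        ∧ (∫ s in uplus..uminus, 1 / (κ - f s)) = M) :=
  stmt5_general c₀ hc₀ f hf hf'' uplus uminus F hlt hfp hfm hfp'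
end

section
/- Let ℓ>0, ε>0, let a:[−ℓ,ℓ]→ℝ be continuously differentiable with a(x) ≥ α > 0 for all x, and let q:[−ℓ,ℓ]→ℝ be continuously differentiable. Suppose λ∈ℝ and u:[−ℓ,ℓ]→ℝ is twice continuously differentiable, satisfies u(−ℓ)=u(ℓ)=0, u(x)>0 for all x∈(−ℓ,ℓ), and solves ε(au′)′ − (qu)′ = λu on [−ℓ,ℓ]. Then λ < 0. -/
open Set

/-!
Suppose `λ ≥ 0`. The flux `ε a u' − q u` has derivative `λ u ≥ 0`, so it is monotone; since `u`
vanishes at the endpoints and is positive inside, `u'(−ℓ) ≥ 0 ≥ u'(ℓ)`, so the flux is `≥ 0` at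
`−ℓ` and `≤ 0` at `ℓ`, hence identically zero. Then `u` solves the linear first-order equation
`u' = q u / (ε a)` with `u(−ℓ) = 0`, and Grönwall's inequality forces `u ≡ 0`, contradicting
positivity.
-/

theorem nonneg_on_Icc_of_pos_on_Ioo {u : ℝ → ℝ} {a b : ℝ} (hpos : ∀ x ∈ Ioo a b, 0 < u x)
    (ha : u a = 0) (hb : u b = 0) : ∀ x ∈ Icc a b, 0 ≤ u x := by
  rintro x ⟨hax, hxb⟩
  rcases hax.eq_or_lt with rfl | hax; · exact ha.ge
  rcases hxb.eq_or_lt with rfl | hxb; · exact hb.ge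
  exact (hpos x ⟨hax, hxb⟩).le

theorem IsLocalMinOn.mul_derivWithin_nonneg {f : ℝ → ℝ} {s : Set ℝ} {x y : ℝ}
    (h : IsLocalMinOn f s x) (hy : y ∈ posTangentConeAt s x) :
    0 ≤ y * derivWithin f s x := by
  have := h.fderivWithin_nonneg hy
  rwa [← mul_one y, ← smul_eq_mul, map_smul, fderivWithin_derivWithin] at this

theorem IsMinOn.derivWithin_Icc_left_nonneg {f : ℝ → ℝ} {a b : ℝ} (hab : a < b)
    (h : IsMinOn f (Icc a b) a) : 0 ≤ derivWithin f (Icc a b) a :=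
  nonneg_of_mul_nonneg_right (h.localize.mul_derivWithin_nonneg
    (sub_mem_posTangentConeAt_of_segment_subset (segment_eq_Icc hab.le).subset)) (sub_pos.2 hab)

theorem IsMinOn.derivWithin_Icc_right_nonpos {f : ℝ → ℝ} {a b : ℝ} (hab : a < b)
    (h : IsMinOn f (Icc a b) b) : derivWithin f (Icc a b) b ≤ 0 :=
  nonpos_of_mul_nonneg_right (h.localize.mul_derivWithin_nonneg
    (sub_mem_posTangentConeAt_of_segment_subset
      ((segment_symm ℝ b a).trans (segment_eq_Icc hab.le)).subset)) (sub_neg.2 hab)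

theorem eqOn_zero_of_hasDerivWithinAt_nonneg {g g' : ℝ → ℝ} {a b : ℝ}
    (hg : ∀ x ∈ Icc a b, HasDerivWithinAt g (g' x) (Icc a b) x)
    (hg' : ∀ x ∈ Icc a b, 0 ≤ g' x) (ha : 0 ≤ g a) (hb : g b ≤ 0) :
    EqOn g 0 (Icc a b) := by
  have hmono : MonotoneOn g (Icc a b) := by
    refine monotoneOn_of_hasDerivWithinAt_nonneg (f' := g') (convex_Icc a b)
      (fun x hx => (hg x hx).continuousWithinAt) (fun x hx => ?_) (fun x hx => ?_)
    · rw [interior_Icc] at hx ⊢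
      exact (hg x (Ioo_subset_Icc_self hx)).mono Ioo_subset_Icc_self
    · exact hg' x (interior_subset hx)
  intro x hx
  have hab : a ∈ Icc a b := left_mem_Icc.2 (hx.1.trans hx.2)
  have hbb : b ∈ Icc a b := right_mem_Icc.2 (hx.1.trans hx.2)
  exact le_antisymm (hb.trans' (hmono hx hbb hx.2)) (ha.trans (hmono hab hx hx.1))

theorem eqOn_zero_of_hasDerivWithinAt_mul_self {u c : ℝ → ℝ} {a b K : ℝ}
    (hu : ∀ x ∈ Icc a b, HasDerivWithinAt u (c x * u x) (Icc a b) x)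
    (hc : ∀ x ∈ Icc a b, |c x| ≤ K) (ha : u a = 0) : EqOn u 0 (Icc a b) := by
  intro x hx
  have := norm_le_gronwallBound_of_norm_deriv_right_le (δ := 0) (K := K) (ε := 0)
    (fun y hy => (hu y hy).continuousWithinAt)
    (fun y hy => (hu y (Ico_subset_Icc_self hy)).mono_of_mem_nhdsWithin (Icc_mem_nhdsGE_of_mem hy))
    (by simp [ha])
    (fun y hy => by
      rw [norm_mul, add_zero]
      exact mul_le_mul_of_nonneg_right (hc y (Ico_subset_Icc_self hy)) (norm_nonneg _)) x hx
  simpa [gronwallBound_ε0_δ0] using this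

theorem eqOn_zero_of_mul_derivWithin_eq_mul {p q u : ℝ → ℝ} {a b : ℝ}
    (hp : ContinuousOn p (Icc a b)) (hp₀ : ∀ x ∈ Icc a b, p x ≠ 0) (hq : ContinuousOn q (Icc a b))
    (hu : DifferentiableOn ℝ u (Icc a b))
    (hpq : ∀ x ∈ Icc a b, p x * derivWithin u (Icc a b) x = q x * u x) (ha : u a = 0) :
    EqOn u 0 (Icc a b) := by
  obtain ⟨K, hK⟩ := isCompact_Icc.exists_bound_of_continuousOn (hq.div hp hp₀)
  refine eqOn_zero_of_hasDerivWithinAt_mul_self (fun x hx => ?_) hK ha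
  refine (hu x hx).hasDerivWithinAt.congr_deriv ?_
  rw [Pi.div_apply, div_mul_eq_mul_div, eq_div_iff (hp₀ x hx), mul_comm, hpq x hx]

/-- A Dirichlet eigenvalue of `L u = ε(a u')' − (q u)'` with a positive
eigenfunction is strictly negative. -/
theorem stmt12 (ℓ ε α : ℝ) (hℓ : 0 < ℓ) (hε : 0 < ε) (hα : 0 < α)
    (a q : ℝ → ℝ) (ha : ContDiffOn ℝ 1 a (Set.Icc (-ℓ) ℓ))
    (haα : ∀ x ∈ Set.Icc (-ℓ) ℓ, α ≤ a x)
    (hq : ContDiffOn ℝ 1 q (Set.Icc (-ℓ) ℓ))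
    (lam : ℝ) (u : ℝ → ℝ) (hu : ContDiffOn ℝ 2 u (Set.Icc (-ℓ) ℓ))
    (hbc1 : u (-ℓ) = 0) (hbc2 : u ℓ = 0)
    (hpos : ∀ x ∈ Set.Ioo (-ℓ) ℓ, 0 < u x)
    (heq : ∀ x ∈ Set.Icc (-ℓ) ℓ,
      ε * derivWithin (fun y => a y * derivWithin u (Set.Icc (-ℓ) ℓ) y)
          (Set.Icc (-ℓ) ℓ) x
        - derivWithin (fun y => q y * u y) (Set.Icc (-ℓ) ℓ) x = lam * u x) :
    lam < 0 := by
  by_contra! hlam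
  set s := Icc (-ℓ) ℓ
  have hℓℓ : -ℓ < ℓ := by linarith
  have hud : DifferentiableOn ℝ u s := hu.differentiableOn (by norm_num)
  have hu'd : DifferentiableOn ℝ (derivWithin u s) s :=
    (hu.derivWithin (uniqueDiffOn_Icc hℓℓ) (by norm_num : (1 : WithTop ℕ∞) + 1 ≤ 2)).differentiableOn one_ne_zero
  have hapos : ∀ x ∈ s, 0 < a x := fun x hx => hα.trans_le (haα x hx)
  have hun := nonneg_on_Icc_of_pos_on_Ioo hpos hbc1 hbc2
  have hmin : ∀ x, u x = 0 → IsMinOn u s x := fun x hx => isMinOn_iff.2 fun y hy => hx ▸ hun y hy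
  have hflux : EqOn (fun x => ε * (a x * derivWithin u s x) - q x * u x) 0 s := by
    refine eqOn_zero_of_hasDerivWithinAt_nonneg (fun x hx => ?_)
      (fun x hx => mul_nonneg hlam (hun x hx)) ?_ ?_
    · rw [← heq x hx]
      exact ((((ha.differentiableOn one_ne_zero x hx).mul (hu'd x hx)).hasDerivWithinAt.const_mul
        ε).sub ((hq.differentiableOn one_ne_zero x hx).mul (hud x hx)).hasDerivWithinAt)
    · simpa [hbc1] using mul_nonneg hε.le (mul_nonneg (hapos _ (left_mem_Icc.2 hℓℓ.le)).le
        ((hmin _ hbc1).derivWithin_Icc_left_nonneg hℓℓ))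
    · simpa [hbc2] using mul_nonpos_of_nonneg_of_nonpos hε.le (mul_nonpos_of_nonneg_of_nonpos
        (hapos _ (right_mem_Icc.2 hℓℓ.le)).le ((hmin _ hbc2).derivWithin_Icc_right_nonpos hℓℓ))
  refine (hpos 0 ⟨by linarith, hℓ⟩).ne' (eqOn_zero_of_mul_derivWithin_eq_mul
    (p := fun x => ε * a x) (continuousOn_const.mul ha.continuousOn)
    (fun x hx => (mul_pos hε (hapos x hx)).ne') hq.continuousOn hud (fun x hx => ?_) hbc1
    ⟨by linarith, hℓ.le⟩)
  have hflux_x : ε * (a x * derivWithin u s x) - q x * u x = 0 := hflux hx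
  linear_combination hflux_x
end
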